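/- Let f₁ ∈ 𝔤 be ad-nilpotent and let the grading by q₁ be good for f₁. Let q₂ ∈ 𝔤 be such that ad(q₂) is diagonalizable with integer eigenvalues, ⁅q₁,q₂⁆ = 0, and ⁅q₂ − q₁, f₁⁆ = 0. Then f₁ ∈ 𝔤_{−2}(q₂), and there exists an sl₂-triple (e₁, h₁, f₁) with e₁ ∈ 𝔤₂(q₁) ∩ 𝔤₂(q₂) and h₁ ∈ 𝔤₀(q₁) ∩ 𝔤₀(q₂). -/

import Mathlib

/-!
The Killing form `κ` is nondegenerate (Cartan's criterion) and `S = (ad f₁)²` is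
`κ`-self-adjoint, so `-2 f₁` lies in the range of `S` once it is `κ`-orthogonal to `ker S`.
As `κ` pairs `𝔤ᵢ(q₁)` only with `𝔤₋ᵢ(q₁)`, it suffices that `κ(f₁, x) = 0` for `x ∈ 𝔤₂(q₁)` with
`⁅f₁, ⁅f₁, x⁆⁆ = 0`. Since `f₁ = -½ ⁅q₁, f₁⁆`, this is a multiple of `κ(q₁, ⁅f₁, x⁆)`, the trace
of `ad q₁` times the commuting endomorphism `ad ⁅f₁, x⁆`, which is nilpotent by Jacobson's lemma.
Because `S` is homogeneous of degree `-4` for both commuting gradings, the component of a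
solution of `S e = -2 f₁` of degree `2` for both is again a solution `e₁`. Then `h₁ = ⁅e₁, f₁⁆`
satisfies `⁅h₁, f₁⁆ = -2 f₁`, and `⁅h₁, e₁⁆ = 2 e₁` because `ad f₁` is injective on `𝔤₂(q₁)`.
-/

open LieAlgebra Module

noncomputable section

variable {L : Type*} [LieRing L] [LieAlgebra ℂ L]

/-- The `j`-eigenspace of `ad q` on the Lie algebra. -/
def gSp (q : L) (j : ℤ) : Submodule ℂ L where
  carrier := {x | ⁅q, x⁆ = (j : ℂ) • x}
  add_mem' {a b} ha hb := by
    simp only [Set.mem_setOf_eq] at *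
    rw [lie_add, ha, hb, smul_add]
  zero_mem' := by simp
  smul_mem' c x hx := by
    simp only [Set.mem_setOf_eq] at *
    rw [lie_smul, hx, smul_comm]

/-- The grading by `q` (whose adjoint action is diagonalizable with integer eigenvalues)
is good for `f`. -/
structure IsGoodGrading (q f : L) : Prop where
  decomp : (⨆ j : ℤ, gSp q j) = ⊤
  f_mem : f ∈ gSp q (-2)
  inj : ∀ j : ℤ, 1 ≤ j → ∀ x ∈ gSp q j, ⁅f, x⁆ = 0 → x = 0
  surj : ∀ j : ℤ, j ≤ 1 → ∀ y ∈ gSp q (j - 2), ∃ x ∈ gSp q j, ⁅f, x⁆ = y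

/-- `m` is a good algebra for `(f, q)`: `m = l ⊕ ⨁_{j ≥ 2} 𝔤_j(q)` for a Lagrangian
subspace `l` of `𝔤₁(q)` with respect to the symplectic form `(x, y) ↦ B f ⁅x, y⁆`. -/
def IsGoodAlgebra (B : LinearMap.BilinForm ℂ L) (q f : L) (m : Submodule ℂ L) : Prop :=
  ∃ l : Submodule ℂ L, l ≤ gSp q 1 ∧
    (∀ x ∈ l, ∀ y ∈ l, B f ⁅x, y⁆ = 0) ∧
    (∀ x ∈ gSp q 1, (∀ y ∈ l, B f ⁅x, y⁆ = 0) → x ∈ l) ∧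
    m = l ⊔ ⨆ j : ℤ, ⨆ _ : 2 ≤ j, gSp q j

open Polynomial in
theorem Finset.eq_zero_of_forall_sum_mul_pow_succ_eq_zero {K : Type*} [Field K] {s : Finset K}
    {d : K → K} (h : ∀ k : ℕ, ∑ ν ∈ s, d ν * ν ^ (k + 1) = 0) {μ : K} (hμs : μ ∈ s)
    (hμ : μ ≠ 0) : d μ = 0 := by
  classical
  -- `X * p` has no constant term and vanishes on `s` except at `μ`.
  set p : K[X] := ∏ ν ∈ s.erase μ, (X - C ν)
  have hsum : ∑ ν ∈ s, d ν * (ν * p.eval ν) = 0 := by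
    simp_rw [eval_eq_sum_range, Finset.mul_sum]
    rw [Finset.sum_comm]
    refine Finset.sum_eq_zero fun i _ => ?_
    rw [← mul_zero (p.coeff i), ← h i, Finset.mul_sum]
    exact Finset.sum_congr rfl fun ν _ => by ring
  rw [Finset.sum_eq_single_of_mem μ hμs fun ν hν hνμ => by
    simp [p, eval_prod, Finset.prod_eq_zero (Finset.mem_erase.2 ⟨hνμ, hν⟩)]] at hsum
  have hp : p.eval μ ≠ 0 := by
    simp only [p, eval_prod, eval_sub, eval_X, eval_C, Finset.prod_ne_zero_iff, Finset.mem_erase]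
    exact fun ν hν => sub_ne_zero.2 (Ne.symm hν.1)
  simpa [hμ, hp] using hsum

namespace Module.End

variable {K V : Type*} [Field K] [AddCommGroup V] [Module K V] [FiniteDimensional K V]

theorem trace_restrict_maxGenEigenspace_pow (C : End K V) (μ : K) (k : ℕ) :
    LinearMap.trace K _ (C.restrict (C.mapsTo_maxGenEigenspace_of_comm rfl μ) ^ k) =
      μ ^ k * finrank K (C.maxGenEigenspace μ) := by
  induction k with
  | zero => simp [LinearMap.trace_one]
  | succ k ih =>
    rw [pow_succ, Module.End.mul_eq_comp,
      LinearMap.trace_comp_eq_mul_of_commute_of_isNilpotent μ ((Commute.refl _).pow_left k)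
        (C.isNilpotent_restrict_maxGenEigenspace_sub_algebraMap μ), ih]
    ring

theorem isNilpotent_of_forall_trace_pow_succ_eq_zero [IsAlgClosed K] [CharZero K] (C : End K V)
    (h : ∀ k : ℕ, LinearMap.trace K V (C ^ (k + 1)) = 0) : IsNilpotent C := by
  classical
  have hindep := C.independent_maxGenEigenspace
  have hfin : {μ | C.maxGenEigenspace μ ≠ ⊥}.Finite :=
    WellFoundedGT.finite_ne_bot_of_iSupIndep hindep
  have hinternal := DirectSum.isInternal_submodule_of_iSupIndep_of_iSup_eq_top hindep
    C.iSup_maxGenEigenspace_eq_top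
  have hpow (k : ℕ) :
      ∑ μ ∈ hfin.toFinset, (finrank K (C.maxGenEigenspace μ) : K) * μ ^ (k + 1) = 0 := by
    rw [← h k, LinearMap.trace_eq_sum_trace_restrict' hinternal hfin
      fun μ => C.mapsTo_maxGenEigenspace_of_comm ((Commute.refl C).pow_right _) μ]
    refine Finset.sum_congr rfl fun μ _ => ?_
    rw [← Module.End.pow_restrict _ (C.mapsTo_maxGenEigenspace_of_comm rfl μ),
      trace_restrict_maxGenEigenspace_pow, mul_comm]
  have hbot (μ : K) (hμ : μ ≠ 0) : C.maxGenEigenspace μ = ⊥ := by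
    by_contra hne
    have := Finset.eq_zero_of_forall_sum_mul_pow_succ_eq_zero hpow (hfin.mem_toFinset.2 hne) hμ
    exact hne (Submodule.finrank_eq_zero.1 (by exact_mod_cast this))
  have htop : C.maxGenEigenspace 0 = ⊤ := by
    rw [← C.iSup_maxGenEigenspace_eq_top]
    refine le_antisymm (le_iSup _ 0) (iSup_le fun μ => ?_)
    rcases eq_or_ne μ 0 with rfl | hμ
    · exact le_rfl
    · simp [hbot μ hμ]
  refine ((C.charpoly_nilpotent_tfae).out 0 2).2 fun v => ?_
  simpa using (C.mem_maxGenEigenspace 0 v).1 (htop ▸ Submodule.mem_top)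

/-- Jacobson's lemma. -/
theorem isNilpotent_mul_sub_mul_of_commute [IsAlgClosed K] [CharZero K] {A B : End K V}
    (h : Commute A (A * B - B * A)) : IsNilpotent (A * B - B * A) := by
  refine isNilpotent_of_forall_trace_pow_succ_eq_zero _ fun k => ?_
  have hk := h.pow_right k
  rw [pow_succ']
  generalize (A * B - B * A) ^ k = D at hk ⊢
  have hD : (A * B - B * A) * D = A * (B * D) - (B * D) * A := by
    simp only [sub_mul, mul_assoc, hk.eq]
  rw [hD, map_sub, LinearMap.trace_mul_comm, sub_self]

end Module.End

namespace LieAlgebra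

section CommRing

variable {R L : Type*} [CommRing R] [LieRing L] [LieAlgebra R L]

theorem ad_lie_eq_mul_sub_mul (x y : L) :
    ad R L ⁅x, y⁆ = ad R L x * ad R L y - ad R L y * ad R L x := by
  ext z
  simp [ad_apply]

theorem commute_ad_of_lie_eq_zero {x y : L} (h : ⁅x, y⁆ = 0) : Commute (ad R L x) (ad R L y) :=
  sub_eq_zero.1 (by rw [← ad_lie_eq_mul_sub_mul, h, map_zero])

end CommRing

variable {K L : Type*} [Field K] [IsAlgClosed K] [CharZero K] [LieRing L] [LieAlgebra K L]
  [FiniteDimensional K L]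

theorem isNilpotent_ad_lie_of_lie_lie_eq_zero {f x : L} (h : ⁅f, ⁅f, x⁆⁆ = 0) :
    IsNilpotent (ad K L ⁅f, x⁆) := by
  have hcomm := commute_ad_of_lie_eq_zero (R := K) h
  rw [ad_lie_eq_mul_sub_mul] at hcomm ⊢
  exact Module.End.isNilpotent_mul_sub_mul_of_commute hcomm

theorem killingForm_lie_eq_zero_of_lie_lie_eq_zero {q f x : L} (h : ⁅f, ⁅f, x⁆⁆ = 0)
    (hq : ⁅q, ⁅f, x⁆⁆ = 0) : killingForm K L q ⁅f, x⁆ = 0 := by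
  rw [killingForm_apply_apply, ← Module.End.mul_eq_comp]
  exact (LinearMap.isNilpotent_trace_of_isNilpotent <|
    (commute_ad_of_lie_eq_zero hq).isNilpotent_mul_left
      (isNilpotent_ad_lie_of_lie_lie_eq_zero h)).eq_zero

end LieAlgebra

theorem LinearMap.BilinForm.mem_range_of_forall_apply_eq_zero {K V : Type*} [Field K]
    [AddCommGroup V] [Module K V] [FiniteDimensional K V] {B : LinearMap.BilinForm K V}
    (hB : B.Nondegenerate) {S : Module.End K V} (hS : ∀ x y, B (S x) y = B x (S y)) {t : V}
    (ht : ∀ x, S x = 0 → B t x = 0) : t ∈ LinearMap.range S := by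
  have hmem : B.toDual hB t ∈ (LinearMap.ker S).dualAnnihilator :=
    (Submodule.mem_dualAnnihilator _).2 fun x hx => ht x hx
  rw [← LinearMap.range_dualMap_eq_dualAnnihilator_ker] at hmem
  obtain ⟨φ, hφ⟩ := hmem
  obtain ⟨w, rfl⟩ := (B.toDual hB).surjective φ
  refine ⟨w, (B.toDual hB).injective (LinearMap.ext fun y => ?_)⟩
  rw [← hφ, LinearMap.dualMap_apply, LinearMap.BilinForm.toDual_def,
    LinearMap.BilinForm.toDual_def, hS]

namespace DirectSum.IsInternal

variable {R M ι : Type*} [Ring R] [AddCommGroup M] [Module R M] [DecidableEq ι]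
  {A : ι → Submodule R M} (h : IsInternal A)

noncomputable def proj (i : ι) : M →ₗ[R] M :=
  (A i).subtype ∘ₗ component R ι (fun i => A i) i ∘ₗ
    (LinearEquiv.ofBijective (coeLinearMap A) h).symm.toLinearMap

include h in
theorem linearMap_ext {N : Type*} [AddCommGroup N] [Module R N] {φ ψ : M →ₗ[R] N}
    (hφψ : ∀ i, ∀ x ∈ A i, φ x = ψ x) : φ = ψ := by
  ext x
  refine Submodule.iSup_induction A (motive := fun y => φ y = ψ y)
    (h.submodule_iSup_eq_top ▸ Submodule.mem_top) hφψ (by simp) fun x y hx hy => ?_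
  rw [map_add, map_add, hx, hy]

theorem proj_mem (i : ι) (x : M) : h.proj i x ∈ A i :=
  Submodule.coe_mem _

theorem proj_apply_of_mem {i : ι} {x : M} (hx : x ∈ A i) : h.proj i x = x := by
  simp [proj, ← apply_eq_component, h.ofBijective_coeLinearMap_of_mem hx]

theorem proj_apply_of_mem_ne {i j : ι} {x : M} (hx : x ∈ A i) (hij : i ≠ j) :
    h.proj j x = 0 := by
  simp [proj, ← apply_eq_component, h.ofBijective_coeLinearMap_of_mem_ne hij hx]

theorem proj_add_apply_of_mapsTo [Add ι] [IsRightCancelAdd ι] {S : M →ₗ[R] M} {d : ι}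
    (hS : ∀ i, ∀ x ∈ A i, S x ∈ A (i + d)) (j : ι) (x : M) :
    h.proj (j + d) (S x) = S (h.proj j x) := by
  suffices h.proj (j + d) ∘ₗ S = S ∘ₗ h.proj j from LinearMap.congr_fun this x
  refine h.linearMap_ext fun i y hy => ?_
  rcases eq_or_ne i j with rfl | hij
  · simp [h.proj_apply_of_mem hy, h.proj_apply_of_mem (hS i y hy)]
  · simp [h.proj_apply_of_mem_ne hy hij,
      h.proj_apply_of_mem_ne (hS i y hy) fun hd => hij (add_right_cancel hd)]

end DirectSum.IsInternal

theorem mem_gSp {q x : L} {j : ℤ} : x ∈ gSp q j ↔ ⁅q, x⁆ = (j : ℂ) • x := Iff.rfl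

theorem gSp_eq_eigenspace (q : L) (j : ℤ) : gSp q j = (ad ℂ L q).eigenspace (j : ℂ) := by
  ext x
  rw [mem_gSp, Module.End.mem_eigenspace_iff, ad_apply]

theorem iSupIndep_gSp (q : L) : iSupIndep (gSp q) := by
  rw [show gSp q = fun j : ℤ => (ad ℂ L q).eigenspace (j : ℂ) from funext (gSp_eq_eigenspace q)]
  exact (Module.End.eigenspaces_iSupIndep _).comp Int.cast_injective

theorem isInternal_gSp {q : L} (hq : ⨆ j : ℤ, gSp q j = ⊤) : DirectSum.IsInternal (gSp q) :=
  DirectSum.isInternal_submodule_of_iSupIndep_of_iSup_eq_top (iSupIndep_gSp q) hq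

theorem lie_mem_gSp {q x y : L} {i j k : ℤ} (hx : x ∈ gSp q i) (hy : y ∈ gSp q j)
    (hk : i + j = k) : ⁅x, y⁆ ∈ gSp q k := by
  rw [mem_gSp] at *
  rw [leibniz_lie, hx, hy, smul_lie, lie_smul, ← hk]
  push_cast
  module

theorem killingForm_eq_zero_of_mem_gSp {q x y : L} {i j : ℤ} (hx : x ∈ gSp q i)
    (hy : y ∈ gSp q j) (hij : i + j ≠ 0) : killingForm ℂ L x y = 0 := by
  have hinv := LieModule.traceForm_apply_lie_apply ℂ L L x q y
  rw [← lie_skew, mem_gSp.1 hx, mem_gSp.1 hy] at hinv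
  simp only [map_neg, map_smul, LinearMap.neg_apply, LinearMap.smul_apply, smul_eq_mul] at hinv
  have : ((i + j : ℤ) : ℂ) * killingForm ℂ L x y = 0 := by
    push_cast
    linear_combination -hinv
  exact (mul_eq_zero.1 this).resolve_left (by exact_mod_cast hij)

theorem proj_gSp_mem_gSp_of_lie_eq_zero {q : L} (hq : ⨆ j : ℤ, gSp q j = ⊤) {q' x : L} {a : ℤ}
    (hqq' : ⁅q', q⁆ = 0) (hx : x ∈ gSp q' a) (j : ℤ) : (isInternal_gSp hq).proj j x ∈ gSp q' a := by
  have hq' : q' ∈ gSp q 0 := by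
    rw [mem_gSp, ← lie_skew, hqq']
    simp
  have hS : ∀ i, ∀ y ∈ gSp q i, (ad ℂ L q' - (a : ℂ) • 1) y ∈ gSp q (i + 0) := fun i y hy =>
    Submodule.sub_mem _ (lie_mem_gSp hq' hy (by ring)) (Submodule.smul_mem _ _ (by simpa))
  have := (isInternal_gSp hq).proj_add_apply_of_mapsTo hS j x
  rw [add_zero, LinearMap.sub_apply, LinearMap.smul_apply, ad_apply, mem_gSp.1 hx,
    Module.End.one_apply, sub_self, map_zero] at this
  rw [mem_gSp, ← sub_eq_zero]
  simpa using this.symm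

theorem lie_lie_proj_gSp {q : L} (hq : ⨆ j : ℤ, gSp q j = ⊤) {f : L} (hf : f ∈ gSp q (-2))
    (x : L) :
    ⁅f, ⁅f, (isInternal_gSp hq).proj 2 x⁆⁆ = (isInternal_gSp hq).proj (-2) ⁅f, ⁅f, x⁆⁆ := by
  have hS : ∀ i, ∀ y ∈ gSp q i, (ad ℂ L f * ad ℂ L f) y ∈ gSp q (i + -4) := fun i y hy =>
    lie_mem_gSp hf (lie_mem_gSp hf hy rfl) (by ring)
  simpa using ((isInternal_gSp hq).proj_add_apply_of_mapsTo hS 2 x).symm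

theorem killingForm_eq_zero_of_lie_lie_eq_zero [FiniteDimensional ℂ L] {q f x : L}
    (hq : ⨆ j : ℤ, gSp q j = ⊤) (hf : f ∈ gSp q (-2)) (hx : ⁅f, ⁅f, x⁆⁆ = 0) :
    killingForm ℂ L f x = 0 := by
  set π := (isInternal_gSp hq).proj
  have hκ : killingForm ℂ L f x = killingForm ℂ L f (π 2 x) := by
    suffices killingForm ℂ L f = killingForm ℂ L f ∘ₗ π 2 from LinearMap.congr_fun this x
    refine (isInternal_gSp hq).linearMap_ext fun i y hy => ?_
    rcases eq_or_ne i 2 with rfl | hi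
    · simp [π, (isInternal_gSp hq).proj_apply_of_mem hy]
    · simp [π, (isInternal_gSp hq).proj_apply_of_mem_ne hy hi,
        killingForm_eq_zero_of_mem_gSp hf hy (by omega)]
  have hfx : ⁅f, ⁅f, π 2 x⁆⁆ = 0 := by
    rw [lie_lie_proj_gSp hq hf, hx, map_zero]
  have hq0 : ⁅q, ⁅f, π 2 x⁆⁆ = 0 := by
    have := lie_mem_gSp (k := 0) hf ((isInternal_gSp hq).proj_mem 2 x) (by norm_num)
    simpa using mem_gSp.1 this
  -- `f` is a multiple of `⁅q, f⁆`, and the Killing form is invariant.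
  have hκq : killingForm ℂ L ⁅q, f⁆ (π 2 x) = 0 := by
    rw [LieModule.traceForm_apply_lie_apply]
    exact killingForm_lie_eq_zero_of_lie_lie_eq_zero hfx hq0
  rw [mem_gSp.1 hf, map_smul, LinearMap.smul_apply, smul_eq_mul] at hκq
  rw [hκ]
  exact (mul_eq_zero.1 hκq).resolve_left (by norm_num)

theorem exists_lie_lie_eq_neg_two_smul [FiniteDimensional ℂ L] [IsKilling ℂ L] {q f : L}
    (hq : ⨆ j : ℤ, gSp q j = ⊤) (hf : f ∈ gSp q (-2)) : ∃ e : L, ⁅f, ⁅f, e⁆⁆ = (-2 : ℂ) • f := by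
  have hskew (u v w : L) : killingForm ℂ L ⁅u, v⁆ w = -killingForm ℂ L v ⁅u, w⁆ := by
    rw [← lie_skew, map_neg, LinearMap.neg_apply, LieModule.traceForm_apply_lie_apply]
  have hmem := LinearMap.BilinForm.mem_range_of_forall_apply_eq_zero
    (IsKilling.killingForm_nondegenerate ℂ L) (S := ad ℂ L f * ad ℂ L f) (t := (-2 : ℂ) • f)
    (fun x y => by simp [hskew]) fun x hx => by
      simp [killingForm_eq_zero_of_lie_lie_eq_zero hq hf (by simpa using hx)]
  obtain ⟨e, he⟩ := hmem
  exact ⟨e, by simpa using he⟩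

theorem IsGoodGrading.lie_lie_eq_two_smul {q f e : L} (hgood : IsGoodGrading q f)
    (he : e ∈ gSp q 2) (hfe : ⁅f, ⁅f, e⁆⁆ = (-2 : ℂ) • f) : ⁅⁅e, f⁆, e⁆ = (2 : ℂ) • e := by
  have hfh : ⁅f, ⁅e, f⁆⁆ = (2 : ℂ) • f := by
    rw [← lie_skew e f, lie_neg, hfe]
    module
  have hmem : ⁅⁅e, f⁆, e⁆ - (2 : ℂ) • e ∈ gSp q 2 := Submodule.sub_mem _
    (lie_mem_gSp (lie_mem_gSp (k := 0) he hgood.f_mem (by norm_num)) he (by norm_num))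
    (Submodule.smul_mem _ _ he)
  rw [← sub_eq_zero]
  refine hgood.inj 2 (by norm_num) _ hmem ?_
  rw [lie_sub, leibniz_lie, hfh, ← lie_skew f e, lie_neg, lie_self, neg_zero, add_zero, smul_lie,
    lie_smul, sub_self]

theorem nice_sl₂_triple_general
    [FiniteDimensional ℂ L] [LieAlgebra.IsSimple ℂ L]
    (f₁ q₁ q₂ : L)
    (hgood₁ : IsGoodGrading q₁ f₁)
    (hq₂diag : (⨆ j : ℤ, gSp q₂ j) = ⊤)
    (hq₁q₂ : ⁅q₁, q₂⁆ = 0)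
    (hq₀f₁ : ⁅q₂ - q₁, f₁⁆ = 0) :
    f₁ ∈ gSp q₂ (-2) ∧
    ∃ e₁ h₁ : L,
      ⁅h₁, e₁⁆ = (2 : ℂ) • e₁ ∧ ⁅h₁, f₁⁆ = (-2 : ℂ) • f₁ ∧ ⁅e₁, f₁⁆ = h₁ ∧
      e₁ ∈ gSp q₁ 2 ∧ e₁ ∈ gSp q₂ 2 ∧ h₁ ∈ gSp q₁ 0 ∧ h₁ ∈ gSp q₂ 0 := by
  have hf₂ : f₁ ∈ gSp q₂ (-2) := by
    rw [mem_gSp, ← mem_gSp.1 hgood₁.f_mem, ← sub_eq_zero, ← sub_lie, hq₀f₁]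
  set π₁ := (isInternal_gSp hgood₁.decomp).proj
  set π₂ := (isInternal_gSp hq₂diag).proj
  obtain ⟨e, he⟩ := exists_lie_lie_eq_neg_two_smul hgood₁.decomp hgood₁.f_mem
  set e₁ := π₂ 2 (π₁ 2 e)
  have he₁ : ⁅f₁, ⁅f₁, e₁⁆⁆ = (-2 : ℂ) • f₁ := by
    rw [lie_lie_proj_gSp hq₂diag hf₂, lie_lie_proj_gSp hgood₁.decomp hgood₁.f_mem, he, map_smul,
      map_smul, (isInternal_gSp hgood₁.decomp).proj_apply_of_mem hgood₁.f_mem,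
      (isInternal_gSp hq₂diag).proj_apply_of_mem hf₂]
  have he₁q₁ : e₁ ∈ gSp q₁ 2 := proj_gSp_mem_gSp_of_lie_eq_zero hq₂diag hq₁q₂
    ((isInternal_gSp hgood₁.decomp).proj_mem 2 e) 2
  have he₁q₂ : e₁ ∈ gSp q₂ 2 := (isInternal_gSp hq₂diag).proj_mem 2 _
  refine ⟨hf₂, e₁, ⁅e₁, f₁⁆, hgood₁.lie_lie_eq_two_smul he₁q₁ he₁, ?_, rfl, he₁q₁, he₁q₂,
    lie_mem_gSp he₁q₁ hgood₁.f_mem (by norm_num), lie_mem_gSp he₁q₂ hf₂ (by norm_num)⟩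
  rw [← lie_skew, ← lie_skew e₁ f₁, lie_neg, neg_neg, he₁]

/-- If the grading by `q₁` is good for `f₁`, `ad q₂` is diagonalizable with integer
eigenvalues, `⁅q₁, q₂⁆ = 0` and `⁅q₂ − q₁, f₁⁆ = 0`, then `f₁ ∈ 𝔤_{−2}(q₂)` and `f₁` embeds
in an sl₂-triple `(e₁, h₁, f₁)` with `e₁ ∈ 𝔤₂(q₁) ∩ 𝔤₂(q₂)` and `h₁ ∈ 𝔤₀(q₁) ∩ 𝔤₀(q₂)`. -/
theorem nice_sl₂_triple
    [FiniteDimensional ℂ L] [LieAlgebra.IsSimple ℂ L]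
    (B : LinearMap.BilinForm ℂ L)
    (hBsymm : ∀ x y : L, B x y = B y x)
    (hBnondeg : ∀ x : L, (∀ y : L, B x y = 0) → x = 0)
    (hBinv : ∀ x y z : L, B ⁅x, y⁆ z = B x ⁅y, z⁆)
    (f₁ q₁ q₂ : L)
    (hnil₁ : IsNilpotent (ad ℂ L f₁))
    (hgood₁ : IsGoodGrading q₁ f₁)
    (hq₂diag : (⨆ j : ℤ, gSp q₂ j) = ⊤)
    (hq₁q₂ : ⁅q₁, q₂⁆ = 0)
    (hq₀f₁ : ⁅q₂ - q₁, f₁⁆ = 0) :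
    f₁ ∈ gSp q₂ (-2) ∧
    ∃ e₁ h₁ : L,
      ⁅h₁, e₁⁆ = (2 : ℂ) • e₁ ∧ ⁅h₁, f₁⁆ = (-2 : ℂ) • f₁ ∧ ⁅e₁, f₁⁆ = h₁ ∧
      e₁ ∈ gSp q₁ 2 ∧ e₁ ∈ gSp q₂ 2 ∧ h₁ ∈ gSp q₁ 0 ∧ h₁ ∈ gSp q₂ 0 :=
  nice_sl₂_triple_general f₁ q₁ q₂ hgood₁ hq₂diag hq₁q₂ hq₀f₁
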